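/- arXiv:1408.2461 — 8 statements merged into one kernel-verified Lean document; each statement's English description precedes it below -/
import Mathlib

section
/- For every prime n with n ≡ 1 (mod 6) or n ≡ 5 (mod 6), and all integers a, b, the integer a^2 + a*b + b^2 divides U(a,b) = (a+b)^n - a^n - b^n. -/
theorem truncated_binomial_dvd_trinomial (n : ℕ) (hp : n.Prime)
    (h : n % 6 = 1 ∨ n % 6 = 5) (a b : ℤ) :
    (a ^ 2 + a * b + b ^ 2) ∣ (a + b) ^ n - a ^ n - b ^ n := by
  set d : ℤ := a ^ 2 + a * b + b ^ 2 with hd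
  have hA : a ^ 3 ≡ b ^ 3 [ZMOD d] := Int.modEq_iff_dvd.mpr ⟨b - a, by ring⟩
  have hS : (a + b) ^ 2 ≡ a * b [ZMOD d] := Int.modEq_iff_dvd.mpr ⟨-1, by ring⟩
  suffices h' : (a + b) ^ n ≡ a ^ n + b ^ n [ZMOD d] by
    have := h'.dvd
    have h2 : d ∣ -((a ^ n + b ^ n) - (a + b) ^ n) := dvd_neg.mpr this
    have h3 : -((a ^ n + b ^ n) - (a + b) ^ n) = (a + b) ^ n - a ^ n - b ^ n := by ring
    rwa [h3] at h2
  rcases h with h | h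
  · obtain ⟨m, rfl⟩ : ∃ m, n = 6 * m + 1 := ⟨n / 6, by omega⟩
    calc (a + b) ^ (6 * m + 1) = ((a + b) ^ 2) ^ (3 * m) * (a + b) := by rw [← pow_mul]; ring
      _ ≡ (a * b) ^ (3 * m) * (a + b) [ZMOD d] := (hS.pow _).mul_right _
      _ = a ^ (3 * m) * (b ^ 3) ^ m * (a + b) := by ring
      _ ≡ a ^ (3 * m) * (a ^ 3) ^ m * (a + b) [ZMOD d] :=
          ((hA.symm.pow m).mul_left _).mul_right _
      _ = a ^ (6 * m + 1) + (a ^ 3) ^ (2 * m) * b := by ring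
      _ ≡ a ^ (6 * m + 1) + (b ^ 3) ^ (2 * m) * b [ZMOD d] :=
          Int.ModEq.add_left _ ((hA.pow _).mul_right _)
      _ = a ^ (6 * m + 1) + b ^ (6 * m + 1) := by ring
  · obtain ⟨m, rfl⟩ : ∃ m, n = 6 * m + 5 := ⟨n / 6, by omega⟩
    have hE : a ^ 3 * b ^ 2 + a ^ 2 * b ^ 3 ≡ a ^ 5 + b ^ 5 [ZMOD d] :=
      Int.modEq_iff_dvd.mpr ⟨(a + b) * (a - b) ^ 2, by ring⟩
    calc (a + b) ^ (6 * m + 5) = ((a + b) ^ 2) ^ (3 * m + 2) * (a + b) := by rw [← pow_mul]; ring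
      _ ≡ (a * b) ^ (3 * m + 2) * (a + b) [ZMOD d] := (hS.pow _).mul_right _
      _ = a ^ (3 * m) * (b ^ 3) ^ m * (a ^ 3 * b ^ 2 + a ^ 2 * b ^ 3) := by ring
      _ ≡ a ^ (3 * m) * (a ^ 3) ^ m * (a ^ 3 * b ^ 2 + a ^ 2 * b ^ 3) [ZMOD d] :=
          ((hA.symm.pow m).mul_left _).mul_right _
      _ ≡ a ^ (3 * m) * (a ^ 3) ^ m * (a ^ 5 + b ^ 5) [ZMOD d] := hE.mul_left _
      _ = a ^ (6 * m + 5) + (a ^ 3) ^ (2 * m) * b ^ 5 := by ring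
      _ ≡ a ^ (6 * m + 5) + (b ^ 3) ^ (2 * m) * b ^ 5 [ZMOD d] :=
          Int.ModEq.add_left _ ((hA.pow _).mul_right _)
      _ = a ^ (6 * m + 5) + b ^ (6 * m + 5) := by ring
end

section
/- For every prime n with n ≡ 1 (mod 6) and all integers a, b, the square (a^2 + a*b + b^2)^2 divides U(a,b) = (a+b)^n - a^n - b^n. -/
open Polynomial

noncomputable def ω : ℂ := ⟨-1/2, Real.sqrt 3 / 2⟩
noncomputable def ω' : ℂ := ⟨-1/2, -(Real.sqrt 3 / 2)⟩

lemma hω : ω^2 + ω + 1 = 0 := by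
  have h3 : Real.sqrt 3 * Real.sqrt 3 = 3 := Real.mul_self_sqrt (by norm_num)
  rw [Complex.ext_iff]
  constructor <;> simp [ω, pow_two, Complex.mul_re, Complex.mul_im] <;> nlinarith [h3]

lemma hω' : ω'^2 + ω' + 1 = 0 := by
  have h3 : Real.sqrt 3 * Real.sqrt 3 = 3 := Real.mul_self_sqrt (by norm_num)
  rw [Complex.ext_iff]
  constructor <;> simp [ω', pow_two, Complex.mul_re, Complex.mul_im] <;> nlinarith [h3]

lemma hne : ω ≠ ω' := by
  have : Real.sqrt 3 > 0 := Real.sqrt_pos.2 (by norm_num)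
  simp [ω, ω', Complex.ext_iff]
  intro hh
  nlinarith

lemma hsum : ω + ω' = -1 := by
  rw [Complex.ext_iff]; constructor <;> simp [ω, ω']

lemma hprod : ω * ω' = 1 := by
  have h3 : Real.sqrt 3 * Real.sqrt 3 = 3 := Real.mul_self_sqrt (by norm_num)
  rw [Complex.ext_iff]
  constructor <;> simp [ω, ω', Complex.mul_re, Complex.mul_im] <;> nlinarith

lemma hcube : ω^3 = 1 := by linear_combination (ω - 1) * hω
lemma hcube' : ω'^3 = 1 := by linear_combination (ω' - 1) * hω'

lemma sq_dvd_aux (z : ℂ) (hz : z^2 + z + 1 = 0) (n k : ℕ) (hnk : n = 6*k+1) :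
    (X - C z)^2 ∣ ((X+1)^n - X^n - 1 : ℂ[X]) := by
  set P : ℂ[X] := (X+1)^n - X^n - 1 with hP
  have z3 : z^3 = 1 := by linear_combination (z - 1) * hz
  have z1 : z + 1 = -z^2 := by linear_combination hz
  have h6 : (-z^2)^6 = 1 := by
    have : (-z^2)^6 = (z^3)^4 := by ring
    rw [this, z3, one_pow]
  have h6k : (-z^2)^(6*k) = 1 := by rw [pow_mul, h6, one_pow]
  have hz6k : z^(6*k) = 1 := by
    have : z^(6*k) = (z^3)^(2*k) := by rw [← pow_mul]; ring_nf
    rw [this, z3, one_pow]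
  have e1 : (z+1)^n = -z^2 := by rw [hnk, z1, pow_succ, pow_mul, ← pow_mul, h6k, one_mul]
  have e2 : z^n = z := by rw [hnk, pow_succ, hz6k, one_mul]
  have hroot : P.eval z = 0 := by
    simp only [hP, eval_sub, eval_pow, eval_add, eval_one, eval_X]
    rw [e1, e2]; linear_combination -hz
  have hP1 : (X - C z) ∣ P := dvd_iff_isRoot.mpr hroot
  obtain ⟨P1, hPP1⟩ := hP1
  have hder : P.derivative.eval z = 0 := by
    have hd : P.derivative = C (n:ℂ) * (X+1)^(n-1) - C (n:ℂ) * X^(n-1) := by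
      simp [hP, derivative_pow]
    rw [hd]
    simp only [eval_sub, eval_mul, eval_C, eval_pow, eval_add, eval_one, eval_X]
    have e3 : (z+1)^(n-1) = 1 := by
      rw [hnk]; simp only [Nat.add_sub_cancel]
      rw [z1, h6k]
    have e4 : z^(n-1) = 1 := by rw [hnk]; simpa using hz6k
    rw [e3, e4]; ring
  have hP1root : P1.eval z = 0 := by
    have hd2 : P.derivative = P1 + (X - C z) * P1.derivative := by
      rw [hPP1, derivative_mul, derivative_X_sub_C, one_mul]
    have := hder
    rw [hd2] at this
    simpa using this
  obtain ⟨P2, hPP2⟩ := dvd_iff_isRoot.mpr hP1root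
  exact ⟨P2, by rw [hPP1, hPP2]; ring⟩

lemma T_dvd_P (n k : ℕ) (hnk : n = 6*k+1) :
    ((X^2 + X + 1 : ℤ[X]))^2 ∣ (X+1)^n - X^n - 1 := by
  have hmonic : ((X^2 + X + 1 : ℤ[X])^2).Monic := by
    apply Polynomial.Monic.pow
    have h1 : ((X:ℤ[X])^2).Monic := monic_X_pow 2
    have : ((X:ℤ[X])^2 + (X + 1)).Monic := by
      apply h1.add_of_left
      apply lt_of_le_of_lt (Polynomial.degree_add_le _ _)
      simp [Polynomial.degree_X_pow]
    simpa [add_assoc] using this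
  rw [← Polynomial.map_dvd_map (Int.castRingHom ℂ) Int.cast_injective hmonic]
  have hmapP : ((X+1)^n - X^n - 1 : ℤ[X]).map (Int.castRingHom ℂ)
      = (X+1)^n - X^n - 1 := by
    simp [Polynomial.map_sub, Polynomial.map_pow, Polynomial.map_add]
  have hmapT : ((X^2 + X + 1 : ℤ[X])^2).map (Int.castRingHom ℂ)
      = ((X - C ω)^2) * ((X - C ω')^2) := by
    have hfac : (X^2 + X + 1 : ℂ[X]) = (X - C ω) * (X - C ω') := by
      have h1 : (C (ω + ω') : ℂ[X]) = C (-1) := by rw [hsum]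
      have h2 : (C (ω * ω') : ℂ[X]) = C 1 := by rw [hprod]
      simp only [C_add, C_mul, C_neg, C_1] at h1 h2
      linear_combination (X:ℂ[X]) * h1 - h2
    simp only [Polynomial.map_pow, Polynomial.map_add, Polynomial.map_one, Polynomial.map_X]
    rw [hfac]; ring
  rw [hmapP, hmapT]
  have hcop : IsCoprime ((X - C ω)^2 : ℂ[X]) ((X - C ω')^2) := by
    apply IsCoprime.pow
    exact Polynomial.isCoprime_X_sub_C_of_isUnit_sub ((sub_ne_zero.mpr hne).isUnit)
  exact hcop.mul_dvd (sq_dvd_aux ω hω n k hnk) (sq_dvd_aux ω' hω' n k hnk)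

theorem truncated_binomial_dvd_trinomial_sq (n : ℕ) (hp : n.Prime)
    (h : n % 6 = 1) (a b : ℤ) :
    (a ^ 2 + a * b + b ^ 2) ^ 2 ∣ (a + b) ^ n - a ^ n - b ^ n := by
  have h2 := hp.two_le
  have h7 : 7 ≤ n := by omega
  obtain ⟨Q, hQ⟩ := T_dvd_P n (n / 6) (by omega)
  by_cases hb : b = 0
  · subst hb
    simp [zero_pow hp.ne_zero]
  set m := n - 4 with hm
  have hn4 : n = 4 + m := by omega
  have hdegP : ((X+1)^n - X^n - 1 : ℤ[X]).natDegree ≤ n := by compute_degree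
  have hQdeg : Q.natDegree < m + 1 := by
    by_cases hQ0 : Q = 0
    · simp [hQ0]
    · have hT2 : ((X^2+X+1 : ℤ[X])).natDegree = 2 := by compute_degree!
      have hTne : ((X^2+X+1 : ℤ[X])^2) ≠ 0 := by
        intro hc
        have := congrArg Polynomial.natDegree hc
        rw [Polynomial.natDegree_pow, hT2] at this
        simp at this
      have := Polynomial.natDegree_mul hTne hQ0
      rw [← hQ] at this
      have hT4 : ((X^2+X+1 : ℤ[X])^2).natDegree = 4 := by
        rw [Polynomial.natDegree_pow, hT2]
      omega
  set c : ℤ := ∑ i ∈ Finset.range (m+1), Q.coeff i * a^i * b^(m-i) with hc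
  refine ⟨c, ?_⟩
  have hbQ : (b:ℚ) ≠ 0 := Int.cast_ne_zero.mpr hb
  set q : ℚ := (a:ℚ) / b with hq
  have hq1 : (b:ℚ) * (q+1) = a + b := by rw [hq]; field_simp
  have hq2 : (b:ℚ) * q = a := by rw [hq]; field_simp
  have hq3 : (b:ℚ)^2 * (q^2+q+1) = (a:ℚ)^2 + a*b + b^2 := by rw [hq]; field_simp
  have hcast : (c:ℚ) = (b:ℚ)^m * (aeval q Q) := by
    rw [aeval_eq_sum_range' hQdeg q, Finset.mul_sum, hc]
    push_cast
    apply Finset.sum_congr rfl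
    intro i hi
    have hi' : i ≤ m := by
      have := Finset.mem_range.mp hi; omega
    have hbi : (b:ℚ)^m = b^(m-i) * b^i := by rw [← pow_add]; congr 1; omega
    rw [zsmul_eq_mul, div_pow, hbi]
    field_simp
  have heval : (q+1)^n - q^n - 1 = (q^2+q+1)^2 * aeval q Q := by
    have := congrArg (aeval q (R := ℤ)) hQ
    simpa using this
  have key : (((a+b)^n - a^n - b^n : ℤ) : ℚ) = (((a^2+a*b+b^2)^2 * c : ℤ) : ℚ) := by
    push_cast
    rw [hcast]
    have e : ((a:ℚ)+b)^n - (a:ℚ)^n - (b:ℚ)^n = (b:ℚ)^n * ((q+1)^n - q^n - 1) := by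
      rw [mul_sub, mul_sub, ← mul_pow, ← mul_pow, hq1, hq2, mul_one]
    rw [e, heval, hn4, pow_add, ← hq3]
    ring
  exact Int.cast_injective key
end

section
/- For every odd prime n and all integers a, b, if n divides a + b and n does not divide a, then n^2 divides U(a,b) = (a+b)^n - a^n - b^n. -/
theorem truncated_binomial_dvd_sq (n : ℕ) (hp : n.Prime) (hodd : Odd n) (a b : ℤ)
    (hab : (n : ℤ) ∣ a + b) (ha : ¬ (n : ℤ) ∣ a) :
    (n : ℤ) ^ 2 ∣ (a + b) ^ n - a ^ n - b ^ n := by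
  obtain ⟨k, hk⟩ := hab
  have hb : b = (n : ℤ) * k - a := by linarith
  have h1 : ((n : ℤ)) ^ 2 ∣ ((-a) + (n : ℤ) * k) ^ n - (-a) ^ (n - 1) * ((n : ℤ) * k) * n
      - (-a) ^ n :=
    dvd_trans ⟨k ^ 2, by ring⟩ (sq_dvd_add_pow_sub_sub ((n : ℤ) * k) (-a) n)
  have hna : (-a) ^ n = -a ^ n := hodd.neg_pow a
  have h2 : ((n : ℤ)) ^ 2 ∣ ((n : ℤ) * k) ^ n := by
    have h2n : 2 ≤ n := hp.two_le
    calc ((n : ℤ)) ^ 2 ∣ ((n : ℤ) * k) ^ 2 := ⟨k ^ 2, by ring⟩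
      _ ∣ ((n : ℤ) * k) ^ n := pow_dvd_pow _ h2n
  have h3 : ((n : ℤ)) ^ 2 ∣ (-a) ^ (n - 1) * ((n : ℤ) * k) * n := ⟨(-a) ^ (n - 1) * k, by ring⟩
  have key : (a + b) ^ n - a ^ n - b ^ n =
      ((n : ℤ) * k) ^ n - (((-a) + (n : ℤ) * k) ^ n - (-a) ^ (n - 1) * ((n : ℤ) * k) * n
        - (-a) ^ n) - (-a) ^ (n - 1) * ((n : ℤ) * k) * n := by
    rw [hk, hb, hna]; ring
  rw [key]
  exact dvd_sub (dvd_sub h2 h1) h3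
end

section
/- There are no positive integers A, B, C, none of which is divisible by 5, such that A^5 + B^5 = C^5. -/
theorem fermat_first_case_5 :
    ¬ ∃ A B C : ℕ, 0 < A ∧ 0 < B ∧ 0 < C ∧
      ¬ 5 ∣ A ∧ ¬ 5 ∣ B ∧ ¬ 5 ∣ C ∧ A ^ 5 + B ^ 5 = C ^ 5 := by
  rintro ⟨A, B, C, _, _, _, hA, hB, hC, h⟩
  have key : ∀ a b c : ZMod 25, a ^ 5 + b ^ 5 = c ^ 5 →
      5 ∣ a.val ∨ 5 ∣ b.val ∨ 5 ∣ c.val := by decide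
  have h25 : (A : ZMod 25) ^ 5 + (B : ZMod 25) ^ 5 = (C : ZMod 25) ^ 5 := by
    exact_mod_cast congrArg (Nat.cast : ℕ → ZMod 25) h
  rcases key _ _ _ h25 with h' | h' | h' <;>
    rw [ZMod.val_natCast] at h' <;> omega
end

section
/- There are no positive integers A, B, C, none of which is divisible by 7, such that A^7 + B^7 = C^7. -/
private def PP (u v : ℤ) : ℤ :=
  u^6 - u^5*v + u^4*v^2 - u^3*v^3 + u^2*v^4 - u*v^5 + v^6

example (y z : ℤ) : (y + z) * PP y z = y^7 + z^7 := by unfold PP; ring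
example (y z : ℤ) : 7*y^6 - PP y z = (y+z) * (6*y^5 - 5*y^4*z + 4*y^3*z^2 - 3*y^2*z^3 + 2*y*z^4 - z^5) := by unfold PP; ring

private lemma coprime_factor {x y z : ℤ} (hyz : IsCoprime y z) (h7x : ¬ (7:ℤ) ∣ x)
    (h : (y + z) * PP y z = (-x) ^ 7) : IsCoprime (y + z) (PP y z) := by
  rw [Int.isCoprime_iff_gcd_eq_one]
  by_contra hg
  obtain ⟨p, hp, hpd⟩ := Nat.exists_prime_and_dvd hg
  have hpZ : Prime (p:ℤ) := Nat.prime_iff_prime_int.mp hp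
  have hp1 : (p:ℤ) ∣ y + z := (Int.natCast_dvd_natCast.mpr hpd).trans (Int.gcd_dvd_left _ _)
  have hpP : (p:ℤ) ∣ PP y z := (Int.natCast_dvd_natCast.mpr hpd).trans (Int.gcd_dvd_right _ _)
  have hpx : (p:ℤ) ∣ x := by
    have : (p:ℤ) ∣ (-x)^7 := h ▸ hp1.mul_right _
    have := hpZ.dvd_of_dvd_pow this
    exact (dvd_neg).mp this
  have hpy6 : (p:ℤ) ∣ 7 * y^6 := by
    have h2 : (y+z) ∣ 7*y^6 - PP y z :=
      ⟨6*y^5 - 5*y^4*z + 4*y^3*z^2 - 3*y^2*z^3 + 2*y*z^4 - z^5, by unfold PP; ring⟩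
    have := dvd_add (hp1.trans h2) hpP
    simpa using this
  rcases hpZ.dvd_mul.mp hpy6 with h7 | hy6
  · have hp7 : p = 7 := by
      have : p ∣ 7 := by exact_mod_cast h7
      exact (Nat.prime_dvd_prime_iff_eq hp (by norm_num)).mp this
    exact h7x (by rw [hp7] at hpx; exact_mod_cast hpx)
  · have hpy : (p:ℤ) ∣ y := hpZ.dvd_of_dvd_pow hy6
    have hpz : (p:ℤ) ∣ z := (dvd_add_right hpy).mp hp1
    have := hyz.isUnit_of_dvd' hpy hpz
    rw [Int.isUnit_iff] at this
    have := hp.two_le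
    omega

private lemma zmod29_sum : ∀ u v w : ZMod 29, u ≠ 0 → v ≠ 0 → w ≠ 0 →
    u ^ 7 + v ^ 7 + w ^ 7 ≠ 0 := by decide

private lemma zmod29_seven : ∀ t : ZMod 29, t ^ 7 ≠ 7 := by decide

private lemma not_unit29 : ¬ IsUnit (29:ℤ) := by
  rw [Int.isUnit_iff]; omega

private lemma key {x y z : ℤ} (hxy : IsCoprime x y) (hyz : IsCoprime y z) (hzx : IsCoprime z x)
    (h7x : ¬ (7:ℤ) ∣ x) (h7y : ¬ (7:ℤ) ∣ y) (h7z : ¬ (7:ℤ) ∣ z)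
    (heq : x ^ 7 + y ^ 7 + z ^ 7 = 0) (hq : (29:ℤ) ∣ x) : False := by
  haveI : Fact (Nat.Prime 29) := ⟨by norm_num⟩
  have odd7 : Odd 7 := ⟨3, rfl⟩
  have e1 : (y + z) * PP y z = (-x) ^ 7 := by
    rw [show (y+z) * PP y z = y^7 + z^7 by unfold PP; ring, show (-x)^7 = -x^7 by ring]
    linarith
  have e2 : (z + x) * PP z x = (-y) ^ 7 := by
    rw [show (z+x) * PP z x = z^7 + x^7 by unfold PP; ring, show (-y)^7 = -y^7 by ring]
    linarith
  have e3 : (x + y) * PP x y = (-z) ^ 7 := by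
    rw [show (x+y) * PP x y = x^7 + y^7 by unfold PP; ring, show (-z)^7 = -z^7 by ring]
    linarith
  obtain ⟨⟨a, ha⟩, ⟨al, hal⟩⟩ := Int.eq_pow_of_mul_eq_pow_odd (coprime_factor hyz h7x e1) odd7 e1
  obtain ⟨b, hb⟩ := Int.eq_pow_of_mul_eq_pow_odd_left (coprime_factor hzx h7y e2) odd7 e2
  obtain ⟨⟨c, hc⟩, ⟨ga, hga⟩⟩ := Int.eq_pow_of_mul_eq_pow_odd (coprime_factor hxy h7z e3) odd7 e3
  have hx0 : ((x : ZMod 29)) = 0 := (ZMod.intCast_zmod_eq_zero_iff_dvd x 29).2 hq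
  have hZ : c^7 + b^7 + (-a)^7 = 2 * x := by
    rw [show (-a)^7 = -a^7 by ring, ← ha, ← hb, ← hc]; ring
  have hs : (c : ZMod 29)^7 + (b : ZMod 29)^7 + ((-a : ℤ) : ZMod 29)^7 = 0 := by
    have := congrArg (fun t : ℤ => (t : ZMod 29)) hZ
    push_cast at this ⊢
    rw [hx0] at this
    linear_combination this
  have h29 : (29:ℤ) ∣ a ∨ (29:ℤ) ∣ b ∨ (29:ℤ) ∣ c := by
    by_contra hcon
    push_neg at hcon
    refine zmod29_sum (c : ZMod 29) (b : ZMod 29) ((-a : ℤ) : ZMod 29) ?_ ?_ ?_ hs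
    · exact fun h => hcon.2.2 ((ZMod.intCast_zmod_eq_zero_iff_dvd c 29).1 h)
    · exact fun h => hcon.2.1 ((ZMod.intCast_zmod_eq_zero_iff_dvd b 29).1 h)
    · intro h
      exact hcon.1 (by simpa using (dvd_neg).mp ((ZMod.intCast_zmod_eq_zero_iff_dvd (-a) 29).1 h))
  rcases h29 with h29a | h29b | h29c
  · -- main case: 29 ∣ y + z
    have hyz29 : (29:ℤ) ∣ y + z := ha ▸ dvd_pow h29a (by norm_num)
    have hzy : (z : ZMod 29) = -(y : ZMod 29) := by
      have := (ZMod.intCast_zmod_eq_zero_iff_dvd (y+z) 29).2 hyz29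
      push_cast at this
      linear_combination this
    have hy0 : (y : ZMod 29) ≠ 0 := by
      intro h
      have h29y : (29:ℤ) ∣ y := (ZMod.intCast_zmod_eq_zero_iff_dvd y 29).1 h
      have h29z : (29:ℤ) ∣ z := (dvd_add_right h29y).mp hyz29
      exact not_unit29 (hyz.isUnit_of_dvd' h29y h29z)
    have h1 : (al : ZMod 29)^7 = 7 * (y : ZMod 29)^6 := by
      have := congrArg (fun t : ℤ => (t : ZMod 29)) hal
      unfold PP at this
      push_cast at this
      rw [hzy] at this
      linear_combination this.symm
    have h2 : (ga : ZMod 29)^7 = (y : ZMod 29)^6 := by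
      have := congrArg (fun t : ℤ => (t : ZMod 29)) hga
      unfold PP at this
      push_cast at this
      rw [hx0] at this
      linear_combination this.symm
    have hy6 : (y : ZMod 29)^6 ≠ 0 := pow_ne_zero _ hy0
    have hga0 : (ga : ZMod 29) ≠ 0 := by
      intro h
      rw [h] at h2
      simp at h2
      exact hy6 h2.symm
    refine zmod29_seven ((al : ZMod 29) * (ga : ZMod 29)⁻¹) ?_
    rw [mul_pow, h1, inv_pow, h2]
    field_simp
  · have : (29:ℤ) ∣ z + x := hb ▸ dvd_pow h29b (by norm_num)
    have h29z : (29:ℤ) ∣ z := (dvd_add_left hq).mp this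
    exact not_unit29 (hzx.isUnit_of_dvd' h29z hq)
  · have : (29:ℤ) ∣ x + y := hc ▸ dvd_pow h29c (by norm_num)
    have h29y : (29:ℤ) ∣ y := (dvd_add_right hq).mp this
    exact not_unit29 (hxy.isUnit_of_dvd' hq h29y)

private lemma copr {x y z : ℤ} (heq : x ^ 7 + y ^ 7 + z ^ 7 = 0)
    (h : ∀ p : ℕ, p.Prime → (p:ℤ) ∣ x → (p:ℤ) ∣ y → (p:ℤ) ∣ z → False) : IsCoprime x y := by
  rw [Int.isCoprime_iff_gcd_eq_one]
  by_contra hg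
  obtain ⟨p, hp, hpd⟩ := Nat.exists_prime_and_dvd hg
  have hpZ : Prime (p:ℤ) := Nat.prime_iff_prime_int.mp hp
  have hpx : (p:ℤ) ∣ x := (Int.natCast_dvd_natCast.mpr hpd).trans (Int.gcd_dvd_left _ _)
  have hpy : (p:ℤ) ∣ y := (Int.natCast_dvd_natCast.mpr hpd).trans (Int.gcd_dvd_right _ _)
  have hpz : (p:ℤ) ∣ z := by
    have : (p:ℤ) ∣ z^7 := by
      have : z^7 = -(x^7 + y^7) := by linarith
      rw [this]
      exact dvd_neg.mpr (dvd_add (dvd_pow hpx (by norm_num)) (dvd_pow hpy (by norm_num)))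
    exact hpZ.dvd_of_dvd_pow this
  exact h p hp hpx hpy hpz

theorem fermat_first_case_7 :
    ¬ ∃ A B C : ℕ, 0 < A ∧ 0 < B ∧ 0 < C ∧
      ¬ 7 ∣ A ∧ ¬ 7 ∣ B ∧ ¬ 7 ∣ C ∧ A ^ 7 + B ^ 7 = C ^ 7 := by
  rintro ⟨A, B, C, hA, hB, hC, h7A, h7B, h7C, heq⟩
  -- divide out the gcd
  obtain ⟨A₁, hA1⟩ := (Nat.gcd_dvd_left (Nat.gcd A B) C).trans (Nat.gcd_dvd_left A B)
  obtain ⟨B₁, hB1⟩ := (Nat.gcd_dvd_left (Nat.gcd A B) C).trans (Nat.gcd_dvd_right A B)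
  obtain ⟨C₁, hC1⟩ := Nat.gcd_dvd_right (Nat.gcd A B) C
  set g := Nat.gcd (Nat.gcd A B) C with hgdef
  have hg0 : 0 < g := Nat.gcd_pos_of_pos_right _ hC
  have heq1 : A₁ ^ 7 + B₁ ^ 7 = C₁ ^ 7 := by
    have h2 : g ^ 7 * (A₁ ^ 7 + B₁ ^ 7) = g ^ 7 * C₁ ^ 7 := by
      rw [hA1, hB1, hC1] at heq
      ring_nf at heq ⊢
      linarith
    exact Nat.eq_of_mul_eq_mul_left (pow_pos hg0 7) h2
  have hgcd1 : Nat.gcd (Nat.gcd A₁ B₁) C₁ = 1 := by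
    have : g * Nat.gcd (Nat.gcd A₁ B₁) C₁ = g * 1 := by
      rw [mul_one, hgdef]
      conv_lhs => rw [← Nat.gcd_mul_left, ← Nat.gcd_mul_left, ← hA1, ← hB1, ← hC1]
    exact Nat.eq_of_mul_eq_mul_left hg0 this
  have hA₁ : 0 < A₁ := Nat.pos_of_ne_zero fun h => by simp [hA1, h] at hA
  have hB₁ : 0 < B₁ := Nat.pos_of_ne_zero fun h => by simp [hB1, h] at hB
  have hC₁ : 0 < C₁ := Nat.pos_of_ne_zero fun h => by simp [hC1, h] at hC
  have h7A₁ : ¬ 7 ∣ A₁ := fun h => h7A (hA1 ▸ h.mul_left g)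
  have h7B₁ : ¬ 7 ∣ B₁ := fun h => h7B (hB1 ▸ h.mul_left g)
  have h7C₁ : ¬ 7 ∣ C₁ := fun h => h7C (hC1 ▸ h.mul_left g)
  set x : ℤ := (A₁ : ℤ) with hx
  set y : ℤ := (B₁ : ℤ) with hy
  set z : ℤ := -(C₁ : ℤ) with hz
  have heqz : x ^ 7 + y ^ 7 + z ^ 7 = 0 := by
    have hcst := congrArg (Nat.cast : ℕ → ℤ) heq1
    push_cast at hcst
    rw [hx, hy, hz, show (-(C₁:ℤ)) ^ 7 = -(C₁:ℤ) ^ 7 by ring]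
    linarith
  have htriple : ∀ p : ℕ, p.Prime → (p:ℤ) ∣ x → (p:ℤ) ∣ y → (p:ℤ) ∣ z → False := by
    intro p hp hpx hpy hpz
    have hpa : p ∣ A₁ := Int.natCast_dvd_natCast.mp hpx
    have hpb : p ∣ B₁ := Int.natCast_dvd_natCast.mp hpy
    have hpc : p ∣ C₁ := Int.natCast_dvd_natCast.mp (dvd_neg.mp hpz)
    have := Nat.le_of_dvd one_pos (hgcd1 ▸ Nat.dvd_gcd (Nat.dvd_gcd hpa hpb) hpc)
    have := hp.two_le
    omega
  have hxy : IsCoprime x y := copr heqz htriple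
  have hyz : IsCoprime y z := copr (by linarith) fun p hp h1 h2 h3 => htriple p hp h3 h1 h2
  have hzx : IsCoprime z x := copr (by linarith) fun p hp h1 h2 h3 => htriple p hp h2 h3 h1
  have h7x : ¬ (7:ℤ) ∣ x := fun h => h7A₁ (by rw [hx] at h; exact_mod_cast h)
  have h7y : ¬ (7:ℤ) ∣ y := fun h => h7B₁ (by rw [hy] at h; exact_mod_cast h)
  have h7z : ¬ (7:ℤ) ∣ z := fun h => h7C₁ (by exact_mod_cast dvd_neg.mp (hz ▸ h))
  have h29 : (29:ℤ) ∣ x ∨ (29:ℤ) ∣ y ∨ (29:ℤ) ∣ z := by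
    by_contra hcon
    push_neg at hcon
    refine zmod29_sum (x : ZMod 29) (y : ZMod 29) (z : ZMod 29) ?_ ?_ ?_ ?_
    · exact fun h => hcon.1 ((ZMod.intCast_zmod_eq_zero_iff_dvd x 29).1 h)
    · exact fun h => hcon.2.1 ((ZMod.intCast_zmod_eq_zero_iff_dvd y 29).1 h)
    · exact fun h => hcon.2.2 ((ZMod.intCast_zmod_eq_zero_iff_dvd z 29).1 h)
    · have := congrArg (fun t : ℤ => (t : ZMod 29)) heqz
      push_cast at this ⊢
      linear_combination this
  rcases h29 with h | h | h
  · exact key hxy hyz hzx h7x h7y h7z heqz h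
  · exact key hyz hzx hxy h7y h7z h7x (by linarith) h
  · exact key hzx hxy hyz h7z h7x h7y (by linarith) h
end

section
/- There are no positive integers A, B, C, none of which is divisible by 11, such that A^11 + B^11 = C^11. -/
lemma key121 : ∀ x y : ZMod 121, x ^ 10 = 1 → y ^ 10 = 1 → (x + y) ^ 10 ≠ 1 := by
  set_option maxRecDepth 100000 in
  set_option maxHeartbeats 4000000 in decide

lemma pow11_pow10 {A : ℕ} (h : ¬ 11 ∣ A) : ((A : ZMod 121) ^ 11) ^ 10 = 1 := by
  have hcop : Nat.Coprime A 121 := by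
    have : Nat.Coprime 11 A := (Nat.Prime.coprime_iff_not_dvd (by norm_num)).mpr h
    have := this.symm
    simpa using this.pow_right 2
  have h1 : A ^ 110 ≡ 1 [MOD 121] := by
    have := Nat.ModEq.pow_totient hcop
    norm_num [Nat.totient_prime_pow (p := 11) (by norm_num) (n := 2)] at this
    convert this using 2
    rw [show (121:ℕ) = 11 ^ 2 by norm_num, Nat.totient_prime_pow (p := 11) (by norm_num) (n := 2) (by norm_num)]
    norm_num
  have h2 : ((A ^ 110 : ℕ) : ZMod 121) = ((1 : ℕ) : ZMod 121) :=
    (ZMod.natCast_eq_natCast_iff _ _ _).mpr h1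
  push_cast at h2
  rw [← pow_mul]
  exact h2

theorem fermat_first_case_11 :
    ¬ ∃ A B C : ℕ, 0 < A ∧ 0 < B ∧ 0 < C ∧
      ¬ 11 ∣ A ∧ ¬ 11 ∣ B ∧ ¬ 11 ∣ C ∧ A ^ 11 + B ^ 11 = C ^ 11 := by
  rintro ⟨A, B, C, -, -, -, hA, hB, hC, heq⟩
  have hcast : (A : ZMod 121) ^ 11 + (B : ZMod 121) ^ 11 = (C : ZMod 121) ^ 11 := by
    have : ((A ^ 11 + B ^ 11 : ℕ) : ZMod 121) = ((C ^ 11 : ℕ) : ZMod 121) := by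
      exact_mod_cast congrArg _ heq
    push_cast at this
    exact this
  exact key121 _ _ (pow11_pow10 hA) (pow11_pow10 hB) (hcast ▸ pow11_pow10 hC)
end

section
/- There are no positive integers A, B, C, none of which is divisible by 13, such that A^13 + B^13 = C^13. -/
/-- The cofactor polynomial: `(x + y) * Qp x y = x^13 + y^13`. -/
private def Qp (x y : ℤ) : ℤ :=
  x^12 - x^11*y + x^10*y^2 - x^9*y^3 + x^8*y^4 - x^7*y^5 + x^6*y^6
    - x^5*y^7 + x^4*y^8 - x^3*y^9 + x^2*y^10 - x*y^11 + y^12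

private lemma Qp_mul (x y : ℤ) : (x + y) * Qp x y = x^13 + y^13 := by
  unfold Qp; ring

private lemma Qp_key (x y : ℤ) :
    13 * x^12 = Qp x y + (x + y) *
      (12*x^11 - 11*x^10*y + 10*x^9*y^2 - 9*x^8*y^3 + 8*x^7*y^4 - 7*x^6*y^5
        + 6*x^5*y^6 - 5*x^4*y^7 + 4*x^3*y^8 - 3*x^2*y^9 + 2*x*y^10 - y^11) := by
  unfold Qp; ring

private lemma cube_cases (a : ZMod 53) :
    a^13 = 0 ∨ a^13 = 1 ∨ a^13 = 23 ∨ a^13 = 30 ∨ a^13 = 52 := by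
  revert a; decide

private lemma N2 (t : ZMod 53) : t^13 ≠ 13 := by revert t; decide

private lemma pow13_zero {a : ZMod 53} (h : a^13 = 0) : a = 0 := by
  haveI : Fact (Nat.Prime 53) := ⟨by norm_num⟩
  exact pow_eq_zero_iff (by norm_num) |>.mp h

private lemma N1 (a b c : ZMod 53) (h : a^13 + b^13 + c^13 = 0) :
    a = 0 ∨ b = 0 ∨ c = 0 := by
  have ha := cube_cases a
  have hb := cube_cases b
  have hc := cube_cases c
  rcases ha with h1|h1|h1|h1|h1 <;> rcases hb with h2|h2|h2|h2|h2 <;>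
    rcases hc with h3|h3|h3|h3|h3 <;> rw [h1, h2, h3] at h <;>
    first
      | exact Or.inl (pow13_zero h1)
      | exact Or.inr (Or.inl (pow13_zero h2))
      | exact Or.inr (Or.inr (pow13_zero h3))
      | exact absurd h (by decide)

private lemma iscop_add {u v : ℤ} (h : IsCoprime v u) : IsCoprime (u + v) u := by
  obtain ⟨a, b, hab⟩ := h
  exact ⟨a, b - a, by linear_combination hab⟩

private lemma cop_Qp {u v : ℤ} (huv : IsCoprime u v) (hne : ¬ (13:ℤ) ∣ (u + v)) :
    IsCoprime (u + v) (Qp u v) := by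
  have h1 : IsCoprime (u + v) u := iscop_add huv.symm
  have h13 : IsCoprime (u + v) (13 : ℤ) :=
    ((Prime.coprime_iff_not_dvd (Int.prime_iff_natAbs_prime.mpr (by norm_num))).2 hne).symm
  have h2 : IsCoprime (u + v) (13 * u^12) := h13.mul_right (h1.pow_right)
  rw [Qp_key u v] at h2
  exact h2.of_add_mul_left_right

/-- The key Sophie Germain style lemma: auxiliary prime 53. -/
private lemma aux (x y z : ℤ) (hxy : IsCoprime x y) (hyz : IsCoprime y z)
    (hxz : IsCoprime x z)
    (h13x : ¬ (13:ℤ) ∣ x) (h13y : ¬ (13:ℤ) ∣ y) (h13z : ¬ (13:ℤ) ∣ z)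
    (heq : x^13 + y^13 + z^13 = 0) (h53 : (53:ℤ) ∣ x) : False := by
  have hodd : Odd 13 := ⟨6, rfl⟩
  have hp13 : Prime (13:ℤ) := Int.prime_iff_natAbs_prime.mpr (by norm_num)
  have hp53 : Prime (53:ℤ) := Int.prime_iff_natAbs_prime.mpr (by norm_num)
  have h53u : ¬ IsUnit (53:ℤ) := hp53.not_unit
  -- generic: for a coprime pair (u,v) whose cube-sum is (-w)^13 with 13 ∤ w
  have key : ∀ u v w : ℤ, IsCoprime u v → ¬ (13:ℤ) ∣ w →
      u^13 + v^13 = (-w)^13 →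
      (∃ α : ℤ, u + v = α^13) ∧ (∃ δ : ℤ, Qp u v = δ^13) := by
    intro u v w huv h13w hw
    have hmul : (u + v) * Qp u v = (-w)^13 := by rw [Qp_mul]; exact hw
    have hne : ¬ (13:ℤ) ∣ (u + v) := by
      intro hdvd
      have : (13:ℤ) ∣ (-w)^13 := by
        rw [← hmul]; exact hdvd.mul_right _
      have : (13:ℤ) ∣ -w := hp13.dvd_of_dvd_pow this
      exact h13w ((dvd_neg).mp this)
    have hcop := cop_Qp huv hne
    exact Int.eq_pow_of_mul_eq_pow_odd hcop hodd hmul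
  -- apply to pairs
  have e1 : x^13 + y^13 = (-z)^13 := by
    rw [hodd.neg_pow]; linarith
  have e2 : z^13 + x^13 = (-y)^13 := by
    rw [hodd.neg_pow]; linarith
  have e3 : y^13 + z^13 = (-x)^13 := by
    rw [hodd.neg_pow]; linarith
  obtain ⟨⟨α, hα⟩, -⟩ := key x y z hxy h13z e1
  obtain ⟨⟨γ, hγ⟩, -⟩ := key z x y (hxz.symm) h13y e2
  obtain ⟨⟨β, hβ⟩, ⟨δ, hδ⟩⟩ := key y z x hyz h13x e3
  -- move to ZMod 53
  have hx0 : ((x : ZMod 53)) = 0 := by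
    rw [ZMod.intCast_zmod_eq_zero_iff_dvd]; exact_mod_cast h53
  -- 2x = α^13 + γ^13 - β^13
  have hid : (α:ℤ)^13 + γ^13 + (-β)^13 = 2 * x := by
    rw [hodd.neg_pow, ← hα, ← hγ, ← hβ]; ring
  have hid' : (α : ZMod 53)^13 + (γ : ZMod 53)^13 + ((-β : ℤ) : ZMod 53)^13 = 0 := by
    have := congrArg (fun t : ℤ => (t : ZMod 53)) hid
    push_cast at this ⊢
    rw [this, hx0]; ring
  have h53dvd : ∀ t : ℤ, (t : ZMod 53) = 0 → (53:ℤ) ∣ t := by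
    intro t ht
    exact_mod_cast (ZMod.intCast_zmod_eq_zero_iff_dvd t 53).mp ht
  have hnotxy : ¬ (53:ℤ) ∣ y := by
    intro hy
    exact h53u (hxy.isUnit_of_dvd' h53 hy)
  rcases N1 _ _ _ hid' with hc | hc | hc
  · -- 53 ∣ α, so 53 ∣ x + y, so 53 ∣ y : contradiction
    have : (53:ℤ) ∣ x + y := by
      rw [hα]; exact (h53dvd α hc).pow (by norm_num)
    exact hnotxy (by omega)
  · -- 53 ∣ γ, so 53 ∣ z + x, so 53 ∣ z : contradiction with coprime x z
    have : (53:ℤ) ∣ z + x := by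
      rw [hγ]; exact (h53dvd γ hc).pow (by norm_num)
    have hz : (53:ℤ) ∣ z := by omega
    exact h53u (hxz.isUnit_of_dvd' h53 hz)
  · -- 53 ∣ β : then z ≡ -y mod 53, and Qp y z ≡ 13 y^12
    have hβ0 : ((β : ℤ) : ZMod 53) = 0 := by
      have h0 : ((-β : ℤ) : ZMod 53) = 0 := hc
      push_cast at h0
      linear_combination -h0
    have hyz53 : ((z : ZMod 53)) = -(y : ZMod 53) := by
      have := congrArg (fun t : ℤ => (t : ZMod 53)) hβ
      push_cast at this
      rw [hβ0] at this
      simp at this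
      linear_combination this
    have hy0 : (y : ZMod 53) ≠ 0 := by
      intro h0
      exact hnotxy (h53dvd y h0)
    have hQ : ((Qp y z : ℤ) : ZMod 53) = 13 * (y : ZMod 53)^12 := by
      unfold Qp
      push_cast
      rw [hyz53]; ring
    have hyα : (y : ZMod 53) = (α : ZMod 53)^13 := by
      have := congrArg (fun t : ℤ => (t : ZMod 53)) hα
      push_cast at this
      rw [hx0] at this
      linear_combination this
    have hδ13 : ((δ : ℤ) : ZMod 53)^13 = 13 * ((α : ZMod 53)^12)^13 := by
      have := congrArg (fun t : ℤ => (t : ZMod 53)) hδ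
      push_cast at this
      rw [hQ] at  this
      rw [← this, hyα]; ring
    -- now 13 is a 13th power mod 53: contradiction with N2
    haveI : Fact (Nat.Prime 53) := ⟨by norm_num⟩
    have hα0 : ((α : ZMod 53)^12)^13 ≠ 0 := by
      intro h0
      apply hy0
      rw [hyα]
      have : (α : ZMod 53) = 0 := by
        simpa [pow_eq_zero_iff] using h0
      simp [this]
    apply N2 (((δ : ℤ) : ZMod 53) * (((α : ZMod 53)^12))⁻¹)
    rw [mul_pow, hδ13, inv_pow, mul_assoc, mul_inv_cancel₀ hα0, mul_one]

theorem fermat_first_case_13 :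
    ¬ ∃ A B C : ℕ, 0 < A ∧ 0 < B ∧ 0 < C ∧
      ¬ 13 ∣ A ∧ ¬ 13 ∣ B ∧ ¬ 13 ∣ C ∧ A ^ 13 + B ^ 13 = C ^ 13 := by
  rintro ⟨A, B, C, hA, hB, hC, h13A, h13B, h13C, heq⟩
  -- reduce to a pairwise coprime solution
  set g := Nat.gcd A B with hg
  have hgpos : 0 < g := Nat.gcd_pos_of_pos_left _ hA
  obtain ⟨a, ha⟩ : g ∣ A := Nat.gcd_dvd_left A B
  obtain ⟨b, hb⟩ : g ∣ B := Nat.gcd_dvd_right A B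
  have hab : Nat.Coprime a b := by
    have h := Nat.coprime_div_gcd_div_gcd (m := A) (n := B) hgpos
    rw [← hg] at h
    rwa [ha, hb, Nat.mul_div_cancel_left _ hgpos, Nat.mul_div_cancel_left _ hgpos] at h
  have hgC13 : g^13 ∣ C^13 := by
    rw [← heq, ha, hb]
    exact Dvd.dvd.add ⟨a^13, by ring⟩ ⟨b^13, by ring⟩
  obtain ⟨c, hceq⟩ : g ∣ C := (Nat.pow_dvd_pow_iff (by norm_num)).mp hgC13
  have heq' : a^13 + b^13 = c^13 := by
    have h2 : g^13 * (a^13 + b^13) = g^13 * c^13 := by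
      rw [ha, hb, hceq] at heq
      ring_nf at heq ⊢
      linarith
    exact Nat.eq_of_mul_eq_mul_left (pow_pos hgpos 13) h2
  have hapos : 0 < a := by
    rcases Nat.eq_zero_or_pos a with h | h
    · subst h; simp at ha; omega
    · exact h
  have hbpos : 0 < b := by
    rcases Nat.eq_zero_or_pos b with h | h
    · subst h; simp at hb; omega
    · exact h
  have h13a : ¬ 13 ∣ a := fun h => h13A (ha ▸ h.mul_left g)
  have h13b : ¬ 13 ∣ b := fun h => h13B (hb ▸ h.mul_left g)
  have h13c : ¬ 13 ∣ c := fun h => h13C (hceq ▸ h.mul_left g)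
  -- pairwise coprimality
  have hac : Nat.Coprime a c := by
    have hd : Nat.gcd a c ∣ b := by
      apply (Nat.pow_dvd_pow_iff (n := 13) (by norm_num)).mp
      have h1 : (Nat.gcd a c)^13 ∣ a^13 := pow_dvd_pow_of_dvd (Nat.gcd_dvd_left a c) 13
      have h2 : (Nat.gcd a c)^13 ∣ c^13 := pow_dvd_pow_of_dvd (Nat.gcd_dvd_right a c) 13
      have : b^13 = c^13 - a^13 := by omega
      rw [this]
      exact Nat.dvd_sub h2 h1
    have h1 : Nat.gcd a c ∣ Nat.gcd a b := Nat.dvd_gcd (Nat.gcd_dvd_left a c) hd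
    have h2 : Nat.gcd a b = 1 := hab
    rw [h2] at h1
    exact Nat.eq_one_of_dvd_one h1
  have hbc : Nat.Coprime b c := by
    have hd : Nat.gcd b c ∣ a := by
      apply (Nat.pow_dvd_pow_iff (n := 13) (by norm_num)).mp
      have h1 : (Nat.gcd b c)^13 ∣ b^13 := pow_dvd_pow_of_dvd (Nat.gcd_dvd_left b c) 13
      have h2 : (Nat.gcd b c)^13 ∣ c^13 := pow_dvd_pow_of_dvd (Nat.gcd_dvd_right b c) 13
      have : a^13 = c^13 - b^13 := by omega
      rw [this]
      exact Nat.dvd_sub h2 h1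
    have h1 : Nat.gcd b c ∣ Nat.gcd a b := Nat.dvd_gcd hd (Nat.gcd_dvd_left b c)
    have h2 : Nat.gcd a b = 1 := hab
    rw [h2] at h1
    exact Nat.eq_one_of_dvd_one h1
  -- move to ℤ with x = a, y = b, z = -c
  set x : ℤ := (a : ℤ)
  set y : ℤ := (b : ℤ)
  set z : ℤ := -(c : ℤ)
  have hxy : IsCoprime x y := Nat.isCoprime_iff_coprime.mpr hab
  have hyz : IsCoprime y z := (Nat.isCoprime_iff_coprime.mpr hbc).neg_right
  have hxz : IsCoprime x z := (Nat.isCoprime_iff_coprime.mpr hac).neg_right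
  have h13x : ¬ (13:ℤ) ∣ x := by
    intro h
    have h' : (13:ℤ) ∣ (a:ℤ) := h
    exact h13a (by exact_mod_cast h')
  have h13y : ¬ (13:ℤ) ∣ y := by
    intro h
    have h' : (13:ℤ) ∣ (b:ℤ) := h
    exact h13b (by exact_mod_cast h')
  have h13z : ¬ (13:ℤ) ∣ z := by
    intro h
    have h' : (13:ℤ) ∣ -(c:ℤ) := h
    rw [dvd_neg] at h'
    exact h13c (by exact_mod_cast h')
  have hzeq : x^13 + y^13 + z^13 = 0 := by
    have : (a:ℤ)^13 + (b:ℤ)^13 = (c:ℤ)^13 := by exact_mod_cast heq'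
    simp only [x, y, z]
    rw [(show Odd 13 from ⟨6, rfl⟩).neg_pow]
    linarith
  -- one of x, y, z is divisible by 53
  have hcast : (x : ZMod 53)^13 + (y : ZMod 53)^13 + (z : ZMod 53)^13 = 0 := by
    have := congrArg (fun t : ℤ => (t : ZMod 53)) hzeq
    push_cast at this
    linear_combination this
  have h53dvd : ∀ t : ℤ, (t : ZMod 53) = 0 → (53:ℤ) ∣ t := by
    intro t ht
    exact_mod_cast (ZMod.intCast_zmod_eq_zero_iff_dvd t 53).mp ht
  rcases N1 _ _ _ hcast with hc | hc | hc
  · exact aux x y z hxy hyz hxz h13x h13y h13z hzeq (h53dvd x hc)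
  · exact aux y z x hyz (hxz.symm) (hxy.symm) h13y h13z h13x
      (by linarith) (h53dvd y hc)
  · exact aux z x y (hxz.symm) hxy (hyz.symm) h13z h13x h13y
      (by linarith) (h53dvd z hc)
end

section
/- There are no positive integers A, B, C, none of which is divisible by 17, such that A^17 + B^17 = C^17. -/
/-- The cofactor `(a^17 + b^17)/(a + b)`. -/
def FF {R : Type*} [CommRing R] (a b : R) : R :=
  a^16 - a^15*b + a^14*b^2 - a^13*b^3 + a^12*b^4 - a^11*b^5 + a^10*b^6 - a^9*b^7
  + a^8*b^8 - a^7*b^9 + a^6*b^10 - a^5*b^11 + a^4*b^12 - a^3*b^13 + a^2*b^14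
  - a*b^15 + b^16

lemma FF_mul {R : Type*} [CommRing R] (a b : R) : (a + b) * FF a b = a^17 + b^17 := by
  unfold FF; ring

lemma FF_symm {R : Type*} [CommRing R] (a b : R) : FF a b = FF b a := by
  unfold FF; ring

lemma FF_key {R : Type*} [CommRing R] (a b : R) :
    FF a b = (a + b) * (a^15 - 2*a^14*b + 3*a^13*b^2 - 4*a^12*b^3 + 5*a^11*b^4
      - 6*a^10*b^5 + 7*a^9*b^6 - 8*a^8*b^7 + 9*a^7*b^8 - 10*a^6*b^9 + 11*a^5*b^10
      - 12*a^4*b^11 + 13*a^3*b^12 - 14*a^2*b^13 + 15*a*b^14 - 16*b^15) + 17*b^16 := by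
  unfold FF; ring

lemma FF_cast (a b : ℤ) : ((FF a b : ℤ) : ZMod 137) = FF (a : ZMod 137) (b : ZMod 137) := by
  unfold FF; push_cast; ring

lemma FF_zero_left {R : Type*} [CommRing R] (b : R) : FF 0 b = b^16 := by
  unfold FF; ring

lemma FF_neg {R : Type*} [CommRing R] (b : R) : FF b (-b) = 17 * b^16 := by
  unfold FF; ring

set_option maxRecDepth 10000 in
lemma PC17 : ∀ x : ZMod 137, x^17 ≠ 17 := by decide

set_option maxRecDepth 100000 in
lemma NCpair : ∀ u v : ZMod 137, u ≠ 0 → v ≠ 0 → u^17 + v^17 ≠ -1 := by decide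

lemma NC {x y z : ZMod 137} (h : x^17 + y^17 + z^17 = 0) : x = 0 ∨ y = 0 ∨ z = 0 := by
  haveI : Fact (Nat.Prime 137) := ⟨by norm_num⟩
  by_contra hc
  push_neg at hc
  obtain ⟨hx, hy, hz⟩ := hc
  have hz17 : z^17 ≠ 0 := pow_ne_zero _ hz
  refine NCpair (x * z⁻¹) (y * z⁻¹) (mul_ne_zero hx (inv_ne_zero hz)) (mul_ne_zero hy (inv_ne_zero hz)) ?_
  have h1 : (x * z⁻¹)^17 + (y * z⁻¹)^17 = (x^17 + y^17) * (z^17)⁻¹ := by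
    rw [mul_pow, mul_pow, inv_pow]; ring
  have h2 : x^17 + y^17 = -z^17 := by linear_combination h
  rw [h1, h2, neg_mul, mul_inv_cancel₀ hz17]

/-- No two of a coprime pair can both be divisible by 137. -/
lemma not_both {x y : ℤ} (hcop : IsCoprime x y) (hx : (x : ZMod 137) = 0)
    (hy : (y : ZMod 137) = 0) : False := by
  have h1 : (137 : ℤ) ∣ x := (ZMod.intCast_zmod_eq_zero_iff_dvd x 137).mp hx
  have h2 : (137 : ℤ) ∣ y := (ZMod.intCast_zmod_eq_zero_iff_dvd y 137).mp hy
  have := hcop.isUnit_of_dvd' h1 h2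
  rw [Int.isUnit_iff] at this
  omega

/-- Sophie Germain style step: both factors of `(-z)^17` are 17-th powers. -/
lemma pow_step (x y z : ℤ) (hxy : IsCoprime x y) (h17 : ¬ (17:ℤ) ∣ z)
    (h : x^17 + y^17 + z^17 = 0) : ∃ r s : ℤ, x + y = r^17 ∧ FF x y = s^17 := by
  have h1 : (x + y) * FF x y = (-z)^17 := by
    rw [FF_mul]; linear_combination h
  have hp17 : Prime (17 : ℤ) := by norm_num
  -- coprimality of the two factors
  have hcop : IsCoprime (x + y) (FF x y) := by
    rw [Int.isCoprime_iff_gcd_eq_one]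
    by_contra hg
    rcases Nat.eq_zero_or_pos (Int.gcd (x + y) (FF x y)) with h0 | hpos
    · obtain ⟨hx0, hf0⟩ := Int.gcd_eq_zero_iff.mp h0
      have hz0 : (-z)^17 = 0 := by rw [← h1, hx0, zero_mul]
      have : z = 0 := by
        have := pow_eq_zero_iff (n := 17) (by norm_num) |>.mp hz0
        omega
      exact h17 (this ▸ dvd_zero 17)
    · obtain ⟨ℓ, hℓp, hℓd⟩ := Nat.exists_prime_and_dvd hg
      have hdl : (ℓ : ℤ) ∣ x + y :=
        dvd_trans (Int.natCast_dvd_natCast.mpr hℓd) (Int.gcd_dvd_left _ _)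
      have hdr : (ℓ : ℤ) ∣ FF x y :=
        dvd_trans (Int.natCast_dvd_natCast.mpr hℓd) (Int.gcd_dvd_right _ _)
      have hprime : Prime (ℓ : ℤ) := Nat.prime_iff_prime_int.mp hℓp
      have hd17 : (ℓ : ℤ) ∣ 17 * y^16 := by
        have : 17 * y^16 = FF x y - (x + y) * (x^15 - 2*x^14*y + 3*x^13*y^2 - 4*x^12*y^3
            + 5*x^11*y^4 - 6*x^10*y^5 + 7*x^9*y^6 - 8*x^8*y^7 + 9*x^7*y^8 - 10*x^6*y^9
            + 11*x^5*y^10 - 12*x^4*y^11 + 13*x^3*y^12 - 14*x^2*y^13 + 15*x*y^14 - 16*y^15) := by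
          rw [FF_key]; ring
        rw [this]
        exact dvd_sub hdr (Dvd.dvd.mul_right hdl _)
      rcases hprime.dvd_mul.mp hd17 with hc17 | hcy
      · have hl17 : ℓ = 17 := by
          have : ℓ ∣ 17 := by exact_mod_cast hc17
          exact (Nat.prime_dvd_prime_iff_eq hℓp (by norm_num)).mp this
        subst hl17
        have hdz : (17 : ℤ) ∣ (-z)^17 := by
          rw [← h1]
          exact Dvd.dvd.mul_right (by exact_mod_cast hdl) _
        have : (17 : ℤ) ∣ -z := by
          exact_mod_cast hp17.dvd_of_dvd_pow hdz
        exact h17 (dvd_neg.mp this)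
      · have hy' : (ℓ : ℤ) ∣ y := hprime.dvd_of_dvd_pow hcy
        have hx' : (ℓ : ℤ) ∣ x := by
          have : x = (x + y) - y := by ring
          rw [this]; exact dvd_sub hdl hy'
        have := hxy.isUnit_of_dvd' hx' hy'
        rw [Int.isUnit_iff] at this
        have := hℓp.two_le
        omega
  have hunit : IsUnit (gcd (x + y) (FF x y)) :=
    hcop.isUnit_of_dvd' (gcd_dvd_left _ _) (gcd_dvd_right _ _)
  obtain ⟨d, hd⟩ := exists_associated_pow_of_mul_eq_pow hunit h1
  have hunit2 : IsUnit (gcd (FF x y) (x + y)) :=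
    hcop.symm.isUnit_of_dvd' (gcd_dvd_left _ _) (gcd_dvd_right _ _)
  obtain ⟨e, he⟩ := exists_associated_pow_of_mul_eq_pow hunit2 (by rw [mul_comm] at h1; exact h1)
  have hodd : Odd 17 := ⟨8, by norm_num⟩
  rcases Int.associated_iff.mp hd with hd' | hd'
  · rcases Int.associated_iff.mp he with he' | he'
    · exact ⟨d, e, hd'.symm, he'.symm⟩
    · exact ⟨d, -e, hd'.symm, by rw [hodd.neg_pow]; omega⟩
  · rcases Int.associated_iff.mp he with he' | he'
    · exact ⟨-d, e, by rw [hodd.neg_pow]; omega, he'.symm⟩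
    · exact ⟨-d, -e, by rw [hodd.neg_pow]; omega, by rw [hodd.neg_pow]; omega⟩

/-- The key case analysis: if 137 divides `a`, we derive a contradiction. -/
lemma case_lemma (a b c r s t u v : ℤ)
    (hab : IsCoprime a b) (hac : IsCoprime a c)
    (hr : a + b = r^17) (ht : b + c = t^17) (hv : a + c = v^17)
    (hs : FF a b = s^17) (hu : FF b c = u^17)
    (hqa : ((a : ZMod 137)) = 0) : False := by
  haveI : Fact (Nat.Prime 137) := ⟨by norm_num⟩
  have hb0 : (b : ZMod 137) ≠ 0 := fun hb => not_both hab hqa hb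
  -- cast the equations
  have hr' : (b : ZMod 137) = (r : ZMod 137)^17 := by
    have := congrArg (Int.cast : ℤ → ZMod 137) hr
    push_cast at this
    rw [hqa, zero_add] at this
    exact this
  have ht' : (b : ZMod 137) + (c : ZMod 137) = (t : ZMod 137)^17 := by
    have := congrArg (Int.cast : ℤ → ZMod 137) ht
    push_cast at this
    exact this
  have hv' : (c : ZMod 137) = (v : ZMod 137)^17 := by
    have := congrArg (Int.cast : ℤ → ZMod 137) hv
    push_cast at this
    rw [hqa, zero_add] at this
    exact this
  have hsum : (r : ZMod 137)^17 + (v : ZMod 137)^17 + (-(t : ZMod 137))^17 = 0 := by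
    rw [Odd.neg_pow ⟨8, by norm_num⟩, ← hr', ← hv', ← ht']
    ring
  rcases NC hsum with h0 | h0 | h0
  · exact hb0 (by rw [hr', h0, zero_pow (by norm_num)])
  · have hc0 : (c : ZMod 137) = 0 := by rw [hv', h0, zero_pow (by norm_num)]
    exact not_both hac hqa hc0
  · have ht0 : (t : ZMod 137) = 0 := neg_eq_zero.mp h0
    have hcb : (c : ZMod 137) = -(b : ZMod 137) := by
      have : (b : ZMod 137) + (c : ZMod 137) = 0 := by
        rw [ht', ht0, zero_pow (by norm_num)]
      linear_combination this
    -- cast the FF equations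
    have hs' : (s : ZMod 137)^17 = (b : ZMod 137)^16 := by
      have := congrArg (Int.cast : ℤ → ZMod 137) hs
      rw [FF_cast, hqa, FF_zero_left] at this
      push_cast at this
      exact this.symm
    have hu' : (u : ZMod 137)^17 = 17 * (b : ZMod 137)^16 := by
      have := congrArg (Int.cast : ℤ → ZMod 137) hu
      rw [FF_cast, hcb, FF_neg] at this
      push_cast at this
      exact this.symm
    have hb16 : (b : ZMod 137)^16 ≠ 0 := pow_ne_zero _ hb0
    have hs0 : (s : ZMod 137) ≠ 0 := by
      intro h
      rw [h, zero_pow (by norm_num)] at hs'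
      exact hb16 hs'.symm
    refine PC17 ((u : ZMod 137) * (s : ZMod 137)⁻¹) ?_
    rw [mul_pow, inv_pow, hu', hs', mul_assoc, mul_inv_cancel₀ hb16, mul_one]

/-- The main integer lemma: no pairwise coprime solution avoiding 17. -/
lemma int_case (a b c : ℤ) (hab : IsCoprime a b) (hac : IsCoprime a c) (hbc : IsCoprime b c)
    (h17a : ¬ (17:ℤ) ∣ a) (h17b : ¬ (17:ℤ) ∣ b) (h17c : ¬ (17:ℤ) ∣ c)
    (heq : a^17 + b^17 + c^17 = 0) : False := by
  obtain ⟨r, s, hr, hs⟩ := pow_step a b c hab h17c heq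
  obtain ⟨t, u, ht, hu⟩ := pow_step b c a hbc h17a (by linear_combination heq)
  obtain ⟨v, w, hv, hw⟩ := pow_step a c b hac h17b (by linear_combination heq)
  have hcast : (a : ZMod 137)^17 + (b : ZMod 137)^17 + (c : ZMod 137)^17 = 0 := by
    have := congrArg (Int.cast : ℤ → ZMod 137) heq
    push_cast at this
    exact this
  rcases NC hcast with h0 | h0 | h0
  · exact case_lemma a b c r s t u v hab hac hr ht hv hs hu h0
  · exact case_lemma b a c r s v w t hab.symm hbc
      (by rw [add_comm]; exact hr) hv ht (by rw [FF_symm]; exact hs) hw h0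
  · exact case_lemma c b a t u r s v hbc.symm hac.symm
      (by rw [add_comm]; exact ht) (by rw [add_comm]; exact hr)
      (by rw [add_comm]; exact hv) (by rw [FF_symm]; exact hu)
      (by rw [FF_symm]; exact hs) h0

theorem fermat_first_case_17 :
    ¬ ∃ A B C : ℕ, 0 < A ∧ 0 < B ∧ 0 < C ∧
      ¬ 17 ∣ A ∧ ¬ 17 ∣ B ∧ ¬ 17 ∣ C ∧ A ^ 17 + B ^ 17 = C ^ 17 := by
  rintro ⟨A, B, C, hA, hB, hC, h17A, h17B, h17C, heq⟩
  -- divide out the gcd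
  set g := Nat.gcd (Nat.gcd A B) C with hg
  have hgA : g ∣ A := dvd_trans (Nat.gcd_dvd_left _ _) (Nat.gcd_dvd_left _ _)
  have hgB : g ∣ B := dvd_trans (Nat.gcd_dvd_left _ _) (Nat.gcd_dvd_right _ _)
  have hgC : g ∣ C := Nat.gcd_dvd_right _ _
  have hgpos : 0 < g := Nat.pos_of_dvd_of_pos hgC hC
  obtain ⟨a, ha⟩ := hgA
  obtain ⟨b, hb⟩ := hgB
  obtain ⟨c, hc⟩ := hgC
  have ha' : a ∣ A := ⟨g, by rw [ha, mul_comm]⟩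
  have hb' : b ∣ B := ⟨g, by rw [hb, mul_comm]⟩
  have hc' : c ∣ C := ⟨g, by rw [hc, mul_comm]⟩
  have heq' : a^17 + b^17 = c^17 := by
    have h1 : g^17 * (a^17 + b^17) = g^17 * c^17 := by
      rw [ha, hb, hc] at heq
      ring_nf at heq ⊢
      linarith
    exact Nat.eq_of_mul_eq_mul_left (pow_pos hgpos 17) h1
  have h17a : ¬ 17 ∣ a := fun h => h17A (h.trans ha')
  have h17b : ¬ 17 ∣ b := fun h => h17B (h.trans hb')
  have h17c : ¬ 17 ∣ c := fun h => h17C (h.trans hc')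
  have hapos : 0 < a := Nat.pos_of_ne_zero (fun h => by subst h; simp at ha; omega)
  -- gcd of the three reduced numbers is 1
  have htriple : Nat.gcd (Nat.gcd a b) c = 1 := by
    set e := Nat.gcd (Nat.gcd a b) c with he
    have hea : e ∣ a := dvd_trans (Nat.gcd_dvd_left _ _) (Nat.gcd_dvd_left _ _)
    have heb : e ∣ b := dvd_trans (Nat.gcd_dvd_left _ _) (Nat.gcd_dvd_right _ _)
    have hec : e ∣ c := Nat.gcd_dvd_right _ _
    have hegA : g * e ∣ A := by rw [ha]; exact Nat.mul_dvd_mul_left g hea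
    have hegB : g * e ∣ B := by rw [hb]; exact Nat.mul_dvd_mul_left g heb
    have hegC : g * e ∣ C := by rw [hc]; exact Nat.mul_dvd_mul_left g hec
    have hge : g * e ∣ g := Nat.dvd_gcd (Nat.dvd_gcd hegA hegB) hegC
    have hep : 0 < e := Nat.pos_of_dvd_of_pos hea hapos
    have h1 : g * e ≤ g * 1 := by simpa using Nat.le_of_dvd hgpos hge
    have h2 := Nat.le_of_mul_le_mul_left h1 hgpos
    omega
  -- pairwise coprimality
  have hdvd_c : ∀ ℓ : ℕ, ℓ.Prime → ℓ ∣ a → ℓ ∣ b → False := by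
    intro ℓ hℓ hla hlb
    have hlc : ℓ ∣ c := hℓ.dvd_of_dvd_pow (p := ℓ) (n := 17) (by
      rw [← heq']; exact Dvd.dvd.add (hla.trans (dvd_pow_self a (by norm_num)))
        (hlb.trans (dvd_pow_self b (by norm_num))))
    have : ℓ ∣ 1 := htriple ▸ Nat.dvd_gcd (Nat.dvd_gcd hla hlb) hlc
    exact hℓ.one_lt.ne' (Nat.dvd_one.mp this)
  have hab : Nat.Coprime a b := by
    by_contra h
    obtain ⟨ℓ, hℓ, hld⟩ := Nat.exists_prime_and_dvd h
    exact hdvd_c ℓ hℓ (hld.trans (Nat.gcd_dvd_left _ _)) (hld.trans (Nat.gcd_dvd_right _ _))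
  have hac : Nat.Coprime a c := by
    by_contra h
    obtain ⟨ℓ, hℓ, hld⟩ := Nat.exists_prime_and_dvd h
    have hla : ℓ ∣ a := hld.trans (Nat.gcd_dvd_left _ _)
    have hlc : ℓ ∣ c := hld.trans (Nat.gcd_dvd_right _ _)
    have hlb : ℓ ∣ b := by
      have h1 : ℓ ∣ b^17 := by
        have : b^17 = c^17 - a^17 := by omega
        rw [this]
        exact Nat.dvd_sub (hlc.trans (dvd_pow_self c (by norm_num)))
          (hla.trans (dvd_pow_self a (by norm_num)))
      exact hℓ.dvd_of_dvd_pow h1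
    exact hdvd_c ℓ hℓ hla hlb
  have hbc : Nat.Coprime b c := by
    by_contra h
    obtain ⟨ℓ, hℓ, hld⟩ := Nat.exists_prime_and_dvd h
    have hlb : ℓ ∣ b := hld.trans (Nat.gcd_dvd_left _ _)
    have hlc : ℓ ∣ c := hld.trans (Nat.gcd_dvd_right _ _)
    have hla : ℓ ∣ a := by
      have h1 : ℓ ∣ a^17 := by
        have : a^17 = c^17 - b^17 := by omega
        rw [this]
        exact Nat.dvd_sub (hlc.trans (dvd_pow_self c (by norm_num)))
          (hlb.trans (dvd_pow_self b (by norm_num)))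
      exact hℓ.dvd_of_dvd_pow h1
    exact hdvd_c ℓ hℓ hla hlb
  -- move to integers
  refine int_case (a : ℤ) (b : ℤ) (-(c : ℤ)) ?_ ?_ ?_ ?_ ?_ ?_ ?_
  · exact_mod_cast Nat.isCoprime_iff_coprime.mpr hab
  · exact (Nat.isCoprime_iff_coprime.mpr hac).neg_right
  · exact (Nat.isCoprime_iff_coprime.mpr hbc).neg_right
  · exact fun h => h17a (by exact_mod_cast h)
  · exact fun h => h17b (by exact_mod_cast h)
  · exact fun h => h17c (Int.ofNat_dvd.mp (by exact_mod_cast (dvd_neg.mp h)))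
  · have : ((a:ℤ))^17 + (b:ℤ)^17 = (c:ℤ)^17 := by exact_mod_cast heq'
    rw [Odd.neg_pow ⟨8, by norm_num⟩]
    linarith
end
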